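/- Let K ≥ 2, let y ∈ {1,…,K}, let α > 0, and set x = α·e_y ∈ ℝ^K. Then for every W ∈ ℝ^{K×K}, the entry-wise sign of the per-sample cross-entropy gradient at W is independent of W and of α: sgn((S(Wx) − e_y) xᵀ) = (𝟙 − 2e_y) e_yᵀ, equivalently −sgn((S(Wx) − e_y) xᵀ) = (2e_y − 𝟙) sgn(x)ᵀ, where 𝟙 ∈ ℝ^K is the all-ones vector. -/

import Mathlib

open Finset Filter

/-- Softmax map on `ℝ^k`. -/
noncomputable def softmax {k : ℕ} (z : Fin k → ℝ) (c : Fin k) : ℝ :=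
  Real.exp (z c) / ∑ j, Real.exp (z j)

/-- Logits `W x` of a linear classifier `W : ℝ^{k×d}` on input `x : ℝ^d`. -/
noncomputable def logits {k d : ℕ} (W : Fin k → Fin d → ℝ) (x : Fin d → ℝ) : Fin k → ℝ :=
  fun c => ∑ j, W c j * x j

/-- Cross-entropy loss `L(W) = -(1/n) ∑ᵢ log S_{yᵢ}(W xᵢ)`. -/
noncomputable def lossCE {n k d : ℕ} (x : Fin n → Fin d → ℝ) (y : Fin n → Fin k)
    (W : Fin k → Fin d → ℝ) : ℝ :=
  -((1 : ℝ) / n) * ∑ i, Real.log (softmax (logits W (x i)) (y i))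

/-- Proxy function `G(W) = (1/n) ∑ᵢ (1 - S_{yᵢ}(W xᵢ))`. -/
noncomputable def proxyG {n k d : ℕ} (x : Fin n → Fin d → ℝ) (y : Fin n → Fin k)
    (W : Fin k → Fin d → ℝ) : ℝ :=
  ((1 : ℝ) / n) * ∑ i, (1 - softmax (logits W (x i)) (y i))

/-- Per-sample gradient matrix `gᵢ(W) = (S(W xᵢ) - e_{yᵢ}) xᵢᵀ`. -/
noncomputable def sampleGrad {k d : ℕ} (x : Fin d → ℝ) (y : Fin k)
    (W : Fin k → Fin d → ℝ) : Fin k → Fin d → ℝ :=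
  fun c j => (softmax (logits W x) c - (if c = y then 1 else 0)) * x j

/-- Full gradient matrix `D(W) = (1/n) ∑ᵢ gᵢ(W)`. -/
noncomputable def gradCE {n k d : ℕ} (x : Fin n → Fin d → ℝ) (y : Fin n → Fin k)
    (W : Fin k → Fin d → ℝ) : Fin k → Fin d → ℝ :=
  fun c j => ((1 : ℝ) / n) * ∑ i, sampleGrad (x i) (y i) W c j

/-- Entry-wise 1-norm of a matrix. -/
noncomputable def norm1M {k d : ℕ} (A : Fin k → Fin d → ℝ) : ℝ :=
  ∑ c, ∑ j, |A c j|

/-- 1-norm of a vector. -/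
noncomputable def norm1V {d : ℕ} (v : Fin d → ℝ) : ℝ := ∑ j, |v j|

/-- `min_{c ≠ y} (e_y - e_c)ᵀ A x`. -/
noncomputable def marginMin {k d : ℕ} (hk : 2 ≤ k) (A : Fin k → Fin d → ℝ)
    (x : Fin d → ℝ) (y : Fin k) : ℝ :=
  (Finset.univ.erase y).inf'
    (by
      obtain ⟨cne, hcne⟩ := Fintype.exists_ne_of_one_lt_card
        (by simpa using (by omega : 1 < k)) y
      exact ⟨cne, Finset.mem_erase.mpr ⟨hcne, Finset.mem_univ _⟩⟩)
    (fun c => logits A x y - logits A x c)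

/-- `min_{i ∈ [n], c ≠ yᵢ} (e_{yᵢ} - e_c)ᵀ W xᵢ`. -/
noncomputable def dataMargin {n k d : ℕ} (hn : 1 ≤ n) (hk : 2 ≤ k)
    (x : Fin n → Fin d → ℝ) (y : Fin n → Fin k) (W : Fin k → Fin d → ℝ) : ℝ :=
  Finset.univ.inf' ⟨⟨0, by omega⟩, Finset.mem_univ _⟩
    (fun i => marginMin hk W (x i) (y i))

/-- Max margin `γ` over the max-norm unit ball. -/
noncomputable def gammaMax {n k d : ℕ} (hn : 1 ≤ n) (hk : 2 ≤ k)
    (x : Fin n → Fin d → ℝ) (y : Fin n → Fin k) : ℝ :=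
  sSup { g : ℝ | ∃ W' : Fin k → Fin d → ℝ, ‖W'‖ ≤ 1 ∧ g = dataMargin hn hk x y W' }

/-- Mini-batch gradient `(1/b) ∑_{i ∈ B} gᵢ(W)`. -/
noncomputable def batchGrad {n k d : ℕ} (x : Fin n → Fin d → ℝ) (y : Fin n → Fin k)
    (B : Finset (Fin n)) (b : ℕ) (W : Fin k → Fin d → ℝ) : Fin k → Fin d → ℝ :=
  fun c j => ((1 : ℝ) / b) * ∑ i ∈ B, sampleGrad (x i) (y i) W c j

/-- Frobenius norm of a matrix. -/
noncomputable def frobNorm {k d : ℕ} (A : Fin k → Fin d → ℝ) : ℝ :=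
  Real.sqrt (∑ c, ∑ j, (A c j) ^ 2)

/-! The entry `(c, j)` of the gradient at `x = α e_y` is `(S_c(Wx) - δ_{cy}) · α δ_{jy}`. The sign is
multiplicative, and since `0 < S_c < 1` for `K ≥ 2`, the first factor is negative for `c = y` and
positive otherwise, whatever `W` is. -/

namespace Real

theorem sign_eq_coe_sign (r : ℝ) : Real.sign r = (SignType.sign r : ℝ) := by
  rcases lt_trichotomy r 0 with hr | rfl | hr
  · simp [Real.sign_of_neg hr, hr]
  · simp [Real.sign_zero]
  · simp [Real.sign_of_pos hr, hr]

theorem sign_mul (r s : ℝ) : Real.sign (r * s) = Real.sign r * Real.sign s := by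
  simp only [sign_eq_coe_sign, _root_.sign_mul, SignType.coe_mul]

theorem sign_ite_pos {p : Prop} [Decidable p] {a : ℝ} (ha : 0 < a) :
    Real.sign (if p then a else 0) = if p then 1 else 0 := by
  split_ifs
  · exact Real.sign_of_pos ha
  · exact Real.sign_zero

end Real

theorem softmax_pos {k : ℕ} (z : Fin k → ℝ) (c : Fin k) : 0 < softmax z c :=
  div_pos (Real.exp_pos _) (Finset.sum_pos (fun _ _ => Real.exp_pos _) ⟨c, mem_univ c⟩)

theorem softmax_lt_one {k : ℕ} (hk : 1 < k) (z : Fin k → ℝ) (c : Fin k) : softmax z c < 1 := by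
  obtain ⟨c', hc'⟩ := Fintype.exists_ne_of_one_lt_card (by simpa using hk) c
  rw [softmax, div_lt_one (Finset.sum_pos (fun _ _ => Real.exp_pos _) ⟨c, mem_univ c⟩)]
  exact Finset.single_lt_sum hc' (mem_univ _) (mem_univ _) (Real.exp_pos _)
    (fun _ _ _ => (Real.exp_pos _).le)

theorem sign_softmax_sub_indicator {k : ℕ} (hk : 1 < k) (z : Fin k → ℝ) (c y : Fin k) :
    Real.sign (softmax z c - if c = y then 1 else 0) = 1 - 2 * (if c = y then 1 else 0) := by
  split_ifs
  · rw [Real.sign_of_neg (by linarith [softmax_lt_one hk z c])]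
    norm_num
  · rw [sub_zero, Real.sign_of_pos (softmax_pos z c)]
    norm_num

theorem sign_sampleGrad {k d : ℕ} (x : Fin d → ℝ) (y : Fin k) (W : Fin k → Fin d → ℝ)
    (c : Fin k) (j : Fin d) :
    Real.sign (sampleGrad x y W c j)
      = Real.sign (softmax (logits W x) c - if c = y then 1 else 0) * Real.sign (x j) :=
  Real.sign_mul _ _

/-- on the orthogonal scale-skewed data `x = α e_y`, the entry-wise sign
of the per-sample cross-entropy gradient is independent of `W` and `α`:
`sgn((S(Wx) − e_y) xᵀ) = (𝟙 − 2e_y) e_yᵀ`, equivalently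
`−sgn((S(Wx) − e_y) xᵀ) = (2e_y − 𝟙) sgn(x)ᵀ`. -/
theorem sign_of_per_sample_gradient (K : ℕ) (hK : 2 ≤ K) (y : Fin K)
    (α : ℝ) (hα : 0 < α) :
    ∀ W : Fin K → Fin K → ℝ, ∀ cc jj : Fin K,
      (Real.sign (sampleGrad (fun j => if j = y then α else 0) y W cc jj)
          = (1 - 2 * (if cc = y then (1 : ℝ) else 0)) * (if jj = y then 1 else 0))
      ∧ (-(Real.sign (sampleGrad (fun j => if j = y then α else 0) y W cc jj))
          = (2 * (if cc = y then (1 : ℝ) else 0) - 1)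
            * Real.sign (if jj = y then α else 0)) := by
  intro W cc jj
  have hsign : Real.sign (sampleGrad (fun j => if j = y then α else 0) y W cc jj)
      = (1 - 2 * (if cc = y then (1 : ℝ) else 0)) * (if jj = y then 1 else 0) := by
    rw [sign_sampleGrad, sign_softmax_sub_indicator (by omega), Real.sign_ite_pos hα]
  refine ⟨hsign, ?_⟩
  rw [hsign, Real.sign_ite_pos hα]
  ring
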